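/- arXiv:2507.07673 — 2 statements merged into one kernel-verified Lean document; each statement's English description precedes it below -/
import Mathlib

section
/- Let p₁, p₂ be distinct primes. For every prime p ∉ {3, p₁, p₂}, at least one element of the set {p₁, p₂, p₁p₂, p₁p₂²} is a cube modulo p. -/
/-! The units of `ZMod p` form a cyclic group, say generated by `g`. If `p₁ ≡ g ^ m` and
`p₂ ≡ g ^ n`, then one of `m, n, m + n, m + 2 n` is divisible by 3, and the corresponding element
of the set is a cube. If `p` divides `p₁` or `p₂`, then `p₁ p₂ ≡ 0 = 0 ^ 3`. -/

theorem exists_cube_mem_of_isCyclic {G : Type*} [Group G] [IsCyclic G] (a b : G) :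
    ∃ c ∈ ({a, b, a * b, a * b ^ 2} : Set G), ∃ x, x ^ 3 = c := by
  obtain ⟨g, hg⟩ := IsCyclic.exists_generator (α := G)
  obtain ⟨m, rfl⟩ := Subgroup.mem_zpowers_iff.mp (hg a)
  obtain ⟨n, rfl⟩ := Subgroup.mem_zpowers_iff.mp (hg b)
  have cube_of_dvd : ∀ k : ℤ, 3 ∣ k → ∃ x, x ^ 3 = g ^ k := by
    rintro _ ⟨j, rfl⟩
    exact ⟨g ^ j, by rw [← zpow_natCast, ← zpow_mul, mul_comm]; rfl⟩
  have hdvd : 3 ∣ m ∨ 3 ∣ n ∨ 3 ∣ m + n ∨ 3 ∣ m + 2 * n := by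
    rcases (by omega : m % 3 = 0 ∨ m % 3 = 1 ∨ m % 3 = 2) with _ | _ | _ <;>
    rcases (by omega : n % 3 = 0 ∨ n % 3 = 1 ∨ n % 3 = 2) with _ | _ | _ <;> omega
  rcases hdvd with h | h | h | h
  · exact ⟨g ^ m, by simp, cube_of_dvd m h⟩
  · exact ⟨g ^ n, by simp, cube_of_dvd n h⟩
  · exact ⟨g ^ m * g ^ n, by simp, by rw [← zpow_add]; exact cube_of_dvd _ h⟩
  · refine ⟨g ^ m * (g ^ n) ^ 2, by simp, ?_⟩
    rw [← zpow_natCast, ← zpow_mul, ← zpow_add, mul_comm]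
    exact cube_of_dvd _ h

theorem exists_cube_mem_of_isCyclic_units {G₀ : Type*} [GroupWithZero G₀] [IsCyclic G₀ˣ]
    (a b : G₀) : ∃ c ∈ ({a, b, a * b, a * b ^ 2} : Set G₀), ∃ x, x ^ 3 = c := by
  rcases eq_or_ne a 0 with rfl | ha
  · exact ⟨0, by simp, 0, by simp⟩
  rcases eq_or_ne b 0 with rfl | hb
  · exact ⟨0, by simp, 0, by simp⟩
  obtain ⟨c, hc, x, rfl⟩ := exists_cube_mem_of_isCyclic (Units.mk0 a ha) (Units.mk0 b hb)
  refine ⟨x ^ 3, ?_, x, rfl⟩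
  simp only [Set.mem_insert_iff, Set.mem_singleton_iff, Units.ext_iff] at hc
  simpa using hc

theorem ZMod.exists_int_dvd_pow_three_sub_iff (p : ℕ) (b : ℤ) :
    (∃ x : ℤ, (p : ℤ) ∣ x ^ 3 - b) ↔ ∃ y : ZMod p, y ^ 3 = b := by
  constructor
  · rintro ⟨x, hx⟩
    exact ⟨x, by exact_mod_cast ((ZMod.intCast_eq_intCast_iff_dvd_sub b (x ^ 3) p).mpr hx).symm⟩
  · rintro ⟨y, hy⟩
    obtain ⟨x, rfl⟩ := ZMod.intCast_surjective y
    exact ⟨x, (ZMod.intCast_eq_intCast_iff_dvd_sub b (x ^ 3) p).mp (by exact_mod_cast hy.symm)⟩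

theorem cube_set_example_general (p₁ p₂ : ℕ)
    (p : ℕ) (hp : p.Prime) :
    ∃ b ∈ ({(p₁ : ℤ), (p₂ : ℤ), (p₁ : ℤ) * p₂, (p₁ : ℤ) * (p₂ : ℤ) ^ 2} : Set ℤ),
      ∃ x : ℤ, (p : ℤ) ∣ x ^ 3 - b := by
  have : Fact p.Prime := ⟨hp⟩
  obtain ⟨c, hc, hcube⟩ := exists_cube_mem_of_isCyclic_units (p₁ : ZMod p) (p₂ : ZMod p)
  obtain ⟨b, hb, rfl⟩ : c ∈ (Int.cast : ℤ → ZMod p) ''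
      {(p₁ : ℤ), (p₂ : ℤ), (p₁ : ℤ) * p₂, (p₁ : ℤ) * (p₂ : ℤ) ^ 2} := by
    simpa [Set.image_insert_eq] using hc
  exact ⟨b, hb, (ZMod.exists_int_dvd_pow_three_sub_iff p b).mpr hcube⟩

/-- For distinct primes `p₁, p₂` and any prime `p ∉ {3, p₁, p₂}`, the set
`{p₁, p₂, p₁p₂, p₁p₂²}` contains a cube modulo `p`. -/
theorem cube_set_example (p₁ p₂ : ℕ) (h₁ : p₁.Prime) (h₂ : p₂.Prime) (hne : p₁ ≠ p₂)
    (p : ℕ) (hp : p.Prime) (hp3 : p ≠ 3) (hpp₁ : p ≠ p₁) (hpp₂ : p ≠ p₂) :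
    ∃ b ∈ ({(p₁ : ℤ), (p₂ : ℤ), (p₁ : ℤ) * p₂, (p₁ : ℤ) * (p₂ : ℤ) ^ 2} : Set ℤ),
      ∃ x : ℤ, (p : ℤ) ∣ x ^ 3 - b :=
  cube_set_example_general p₁ p₂ p hp
end

section
/- Let q be an odd prime and Q the set of nonzero squares of F_q. The point set S = {⟨(0,1,−s)⟩, ⟨(−s,0,1)⟩, ⟨(1,−s,0)⟩ : s ∈ Q} ∪ {⟨(1,0,0)⟩, ⟨(0,1,0)⟩, ⟨(0,0,1)⟩} is a blocking set of PG(F_q³): every line of PG(F_q³) (equivalently every hyperplane, given by an equation aX₁+bX₂+cX₃=0 with (a,b,c) ≠ 0) contains a point of S. -/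
/-!
A line `aX₁ + bX₂ + cX₃ = 0` with a vanishing coefficient passes through a vertex of the
triangle. Otherwise it meets the three sides in the points with `s = b/c`, `s = c/a` and
`s = a/b`; these three ratios multiply to `1`, and since the nonsquares form a single coset of
the squares in `F_q^×`, a product of three nonsquares is a nonsquare, so one of the ratios
is a square.
-/

theorem FiniteField.isSquare_or_isSquare_or_isSquare_of_mul_eq_one {F : Type*} [Field F]
    [Fintype F] [DecidableEq F] {x y z : F} (h : x * y * z = 1) :
    IsSquare x ∨ IsSquare y ∨ IsSquare z := by
  by_contra! hns
  obtain ⟨hx, hy, hz⟩ := hns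
  have hχ := congrArg (quadraticChar F) h
  rw [map_mul, map_mul, quadraticChar_neg_one_iff_not_isSquare.2 hx,
    quadraticChar_neg_one_iff_not_isSquare.2 hy, quadraticChar_neg_one_iff_not_isSquare.2 hz,
    map_one] at hχ
  norm_num at hχ

theorem IsSquare.exists_ne_zero_sq_eq {K : Type*} [MonoidWithZero K] {s : K}
    (hs : IsSquare s) (hs0 : s ≠ 0) : ∃ t : K, t ≠ 0 ∧ t ^ 2 = s := by
  obtain ⟨t, rfl⟩ := hs
  exact ⟨t, fun ht => hs0 (by simp [ht]), pow_two t⟩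

theorem forall_mem_span_singleton_linear_form_eq_zero {R : Type*} [CommRing R] (a b c : R)
    (w : Fin 3 → R) :
    (∀ v ∈ Submodule.span R {w}, a * v 0 + b * v 1 + c * v 2 = 0) ↔
      a * w 0 + b * w 1 + c * w 2 = 0 := by
  refine ⟨fun h => h w (Submodule.mem_span_singleton_self w), fun hw v hv => ?_⟩
  obtain ⟨k, rfl⟩ := Submodule.mem_span_singleton.1 hv
  simp only [Pi.smul_apply, smul_eq_mul]
  linear_combination k * hw

theorem projective_triangle_blocking_general (q : ℕ) (hq : q.Prime)
    (a b c : ZMod q) :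
    ∃ W ∈ {W : Submodule (ZMod q) (Fin 3 → ZMod q) |
      (∃ s : ZMod q, (∃ t : ZMod q, t ≠ 0 ∧ t ^ 2 = s) ∧
        (W = Submodule.span (ZMod q) {![0, 1, -s]} ∨
         W = Submodule.span (ZMod q) {![-s, 0, 1]} ∨
         W = Submodule.span (ZMod q) {![1, -s, 0]})) ∨
      W = Submodule.span (ZMod q) {![1, 0, 0]} ∨
      W = Submodule.span (ZMod q) {![0, 1, 0]} ∨
      W = Submodule.span (ZMod q) {![0, 0, 1]}},
      ∀ v ∈ W, a * v 0 + b * v 1 + c * v 2 = 0 := by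
  have := Fact.mk hq
  have blocks (w : Fin 3 → ZMod q) (hw : a * w 0 + b * w 1 + c * w 2 = 0) :
      ∀ v ∈ Submodule.span (ZMod q) {w}, a * v 0 + b * v 1 + c * v 2 = 0 :=
    (forall_mem_span_singleton_linear_form_eq_zero a b c w).2 hw
  by_cases ha : a = 0
  · exact ⟨_, Or.inr (Or.inl rfl), blocks _ (by simp [ha])⟩
  by_cases hb : b = 0
  · exact ⟨_, Or.inr (Or.inr (Or.inl rfl)), blocks _ (by simp [hb])⟩
  by_cases hc : c = 0
  · exact ⟨_, Or.inr (Or.inr (Or.inr rfl)), blocks _ (by simp [hc])⟩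
  have hprod : b / c * (c / a) * (a / b) = 1 := by field_simp
  rcases FiniteField.isSquare_or_isSquare_or_isSquare_of_mul_eq_one hprod with hs | hs | hs
  · refine ⟨_, Or.inl ⟨b / c, hs.exists_ne_zero_sq_eq (by simp [hb, hc]), Or.inl rfl⟩,
      blocks _ ?_⟩
    simp [mul_div_cancel₀ b hc]
  · refine ⟨_, Or.inl ⟨c / a, hs.exists_ne_zero_sq_eq (by simp [ha, hc]), Or.inr (Or.inl rfl)⟩,
      blocks _ ?_⟩
    simp [mul_div_cancel₀ c ha]
  · refine ⟨_, Or.inl ⟨a / b, hs.exists_ne_zero_sq_eq (by simp [ha, hb]), Or.inr (Or.inr rfl)⟩,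
      blocks _ ?_⟩
    simp [mul_div_cancel₀ a hb]

/-- The projective-triangle point set is a blocking set of `PG(F_q³)`: every
hyperplane `aX₁ + bX₂ + cX₃ = 0` (with `(a,b,c) ≠ 0`) contains one of its points. -/
theorem projective_triangle_blocking (q : ℕ) (hq : q.Prime) (hqodd : Odd q)
    (a b c : ZMod q) (habc : ¬(a = 0 ∧ b = 0 ∧ c = 0)) :
    ∃ W ∈ {W : Submodule (ZMod q) (Fin 3 → ZMod q) |
      (∃ s : ZMod q, (∃ t : ZMod q, t ≠ 0 ∧ t ^ 2 = s) ∧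
        (W = Submodule.span (ZMod q) {![0, 1, -s]} ∨
         W = Submodule.span (ZMod q) {![-s, 0, 1]} ∨
         W = Submodule.span (ZMod q) {![1, -s, 0]})) ∨
      W = Submodule.span (ZMod q) {![1, 0, 0]} ∨
      W = Submodule.span (ZMod q) {![0, 1, 0]} ∨
      W = Submodule.span (ZMod q) {![0, 0, 1]}},
      ∀ v ∈ W, a * v 0 + b * v 1 + c * v 2 = 0 :=
  projective_triangle_blocking_general q hq a b c
end
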